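/- Let Φ : 𝒞(ℝ^c) → 𝒞(ℝ^d) be a mapping such that for all C ∈ 𝒞(ℝ^c) and all x, x₁, …, x_n ∈ ℝ^c: (i) x ∈ C implies Φ({x}) ⊆ Φ(C); (ii) x ∉ C implies Φ({x}) ∩ Φ(C) = Φ(∅); (iii) the union ⋃_{x ∈ ℝ^c} Φ({x}) is convex; (iv) C ⊆ conv{x₁, …, x_n} implies Φ(C) ⊆ conv(Φ({x₁}) ∪ ⋯ ∪ Φ({x_n})). Then for every C ∈ 𝒞(ℝ^c) one has Φ(C) = (⋃_{x∈C} Φ({x})) ∪ Φ(∅), for every nonempty C ∈ 𝒞(ℝ^c) one has Φ(C) = ⋃_{x∈C} Φ({x}), and Φ is a lattice homomorphism. -/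

import Mathlib

/-!
Every compact convex `C` lies in the convex hull of finitely many points, so by (iv) `Φ(C)` lies
in the convex hull of finitely many sets `Φ({x})`, hence by (iii) in `⋃ₓ Φ({x})`. A point of
`Φ(C)` that lies in `Φ({x})` for some `x ∉ C` is in `Φ(∅)` by (ii); with (i) this gives the
formula for `Φ(C)`. Meets then follow pointwise from (i) and (ii). For joins, every point `x` of
`conv(C ∪ D)` is a convex combination of finitely many points of `C ∪ D`, and (iv) applied to `{x}`
puts `Φ({x})` into `conv(Φ(C) ∪ Φ(D))`.
-/

open Set

noncomputable section

/-- Euclidean space `ℝ^n`. -/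
abbrev E (n : ℕ) := EuclideanSpace ℝ (Fin n)

/-- A convex body of `ℝ^n`: a compact convex subset (possibly empty). -/
def IsBody {n : ℕ} (C : Set (E n)) : Prop := Convex ℝ C ∧ IsCompact C

/-- `Φ` represents a lattice homomorphism from `𝒞(ℝ^c)` to `𝒞(ℝ^d)`: it maps convex bodies
to convex bodies, and on convex bodies it preserves intersections (the lattice meet) and
convex hulls of unions (the lattice join). -/
def IsLatHom {c d : ℕ} (Φ : Set (E c) → Set (E d)) : Prop :=
  (∀ C, IsBody C → IsBody (Φ C)) ∧
  ∀ C D : Set (E c), IsBody C → IsBody D →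
    Φ (C ∩ D) = Φ C ∩ Φ D ∧ Φ (convexHull ℝ (C ∪ D)) = convexHull ℝ (Φ C ∪ Φ D)

/-- `Φ` is non-trivial: it is not constant on convex bodies. -/
def NonTrivial {c d : ℕ} (Φ : Set (E c) → Set (E d)) : Prop :=
  ∃ C D : Set (E c), IsBody C ∧ IsBody D ∧ Φ C ≠ Φ D

/-- The closed ray emanating from `o` in direction `u`. -/
def Ray {n : ℕ} (o u : E n) : Set (E n) := {p | ∃ t : ℝ, 0 ≤ t ∧ p = o + t • u}

/-- An affine hyperplane of `ℝ^n`: a nonempty affine subspace of dimension `n - 1`. -/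
def IsHyperplane {n : ℕ} (H : AffineSubspace ℝ (E n)) : Prop :=
  (H : Set (E n)).Nonempty ∧ Module.finrank ℝ H.direction + 1 = n

open scoped Classical in
/-- The dimension of a convex set: the dimension of its affine hull, with `sdim ∅ = -1`. -/
def sdim {n : ℕ} (s : Set (E n)) : ℤ :=
  if s = ∅ then -1 else Module.finrank ℝ (affineSpan ℝ s).direction

section ConvexHull

variable {V : Type*} [AddCommGroup V] [Module ℝ V]

theorem exists_fin_range_subset_of_mem_convexHull {s : Set V} {x : V}
    (hx : x ∈ convexHull ℝ s) :
    ∃ (n : ℕ) (f : Fin n → V), range f ⊆ s ∧ x ∈ convexHull ℝ (range f) := by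
  rw [convexHull_eq_union_convexHull_finite_subsets, mem_iUnion₂] at hx
  obtain ⟨t, hts, hxt⟩ := hx
  obtain ⟨n, f, -, hf⟩ := t.finite_toSet.fin_param
  rw [← hf] at hts hxt
  exact ⟨n, f, hts, hxt⟩

variable [TopologicalSpace V] [ContinuousAdd V] [ContinuousSMul ℝ V]

theorem IsCompact.convexJoin {s t : Set V} (hs : IsCompact s) (ht : IsCompact t) :
    IsCompact (_root_.convexJoin ℝ s t) := by
  have hjoin : _root_.convexJoin ℝ s t =
      (fun p : V × V × ℝ => (1 - p.2.2) • p.1 + p.2.2 • p.2.1) '' (s ×ˢ t ×ˢ Icc 0 1) := by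
    ext z
    simp [mem_convexJoin, segment_eq_image, and_assoc]
  rw [hjoin]
  exact (hs.prod (ht.prod isCompact_Icc)).image (by fun_prop)

theorem Convex.isCompact_convexHull_union {s t : Set V} (hs : Convex ℝ s) (ht : Convex ℝ t)
    (hsc : IsCompact s) (htc : IsCompact t) : IsCompact (convexHull ℝ (s ∪ t)) := by
  rcases s.eq_empty_or_nonempty with rfl | hs₀
  · rwa [empty_union, ht.convexHull_eq]
  rcases t.eq_empty_or_nonempty with rfl | ht₀
  · rwa [union_empty, hs.convexHull_eq]
  rw [hs.convexHull_union ht hs₀ ht₀]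
  exact hsc.convexJoin htc

end ConvexHull

theorem Convex.exists_fin_subset_convexHull_of_isCompact {V : Type*} [NormedAddCommGroup V]
    [NormedSpace ℝ V] [FiniteDimensional ℝ V] {s : Set V} (hs : Convex ℝ s)
    (hsc : IsCompact s) : ∃ (n : ℕ) (f : Fin n → V), s ⊆ convexHull ℝ (range f) := by
  obtain ⟨u, hsu, -⟩ := hs.exists_subset_interior_convexHull_finset_of_isCompact hsc
    (Filter.univ_mem (f := nhdsSet s))
  obtain ⟨n, f, -, hf⟩ := u.finite_toSet.fin_param
  exact ⟨n, f, hf ▸ hsu.trans interior_subset⟩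

theorem isBody_singleton {n : ℕ} (x : E n) : IsBody {x} :=
  ⟨convex_singleton x, isCompact_singleton⟩

theorem isBody_empty {n : ℕ} : IsBody (∅ : Set (E n)) :=
  ⟨convex_empty, isCompact_empty⟩

theorem IsBody.inter {n : ℕ} {C D : Set (E n)} (hC : IsBody C) (hD : IsBody D) :
    IsBody (C ∩ D) :=
  ⟨hC.1.inter hD.1, hC.2.inter_right hD.2.isClosed⟩

theorem IsBody.convexHull_union {n : ℕ} {C D : Set (E n)} (hC : IsBody C) (hD : IsBody D) :
    IsBody (convexHull ℝ (C ∪ D)) :=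
  ⟨convex_convexHull ℝ _, hC.1.isCompact_convexHull_union hD.1 hC.2 hD.2⟩

section PointConditions

variable {c d : ℕ}

def PreservesMem (Φ : Set (E c) → Set (E d)) : Prop :=
  ∀ C : Set (E c), IsBody C → ∀ x : E c, x ∈ C → Φ {x} ⊆ Φ C

def PreservesNotMem (Φ : Set (E c) → Set (E d)) : Prop :=
  ∀ C : Set (E c), IsBody C → ∀ x : E c, x ∉ C → Φ {x} ∩ Φ C = Φ (∅ : Set (E c))

def PreservesHullBounds (Φ : Set (E c) → Set (E d)) : Prop :=
  ∀ C : Set (E c), IsBody C → ∀ (n : ℕ) (x : Fin n → E c),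
    C ⊆ convexHull ℝ (range x) → Φ C ⊆ convexHull ℝ (⋃ i, Φ {x i})

variable {Φ : Set (E c) → Set (E d)} {C D : Set (E c)}

theorem PreservesNotMem.image_empty_subset_singleton (h2 : PreservesNotMem Φ) (x : E c) :
    Φ ∅ ⊆ Φ {x} := by
  rw [← h2 ∅ isBody_empty x (notMem_empty x)]
  exact inter_subset_left

theorem image_empty_subset (h1 : PreservesMem Φ) (h2 : PreservesNotMem Φ) (hC : IsBody C) :
    Φ ∅ ⊆ Φ C := by
  rcases C.eq_empty_or_nonempty with rfl | ⟨x, hx⟩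
  · exact subset_rfl
  · exact (h2.image_empty_subset_singleton x).trans (h1 C hC x hx)

theorem image_subset_iUnion_image_singleton (h3 : Convex ℝ (⋃ x : E c, Φ {x}))
    (h4 : PreservesHullBounds Φ) (hC : IsBody C) : Φ C ⊆ ⋃ x : E c, Φ {x} := by
  obtain ⟨n, f, hf⟩ := hC.1.exists_fin_subset_convexHull_of_isCompact hC.2
  exact (h4 C hC n f hf).trans <|
    convexHull_min (iUnion_subset fun i => subset_iUnion (fun x => Φ {x}) (f i)) h3

theorem image_eq_biUnion_union_empty (h1 : PreservesMem Φ) (h2 : PreservesNotMem Φ)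
    (h3 : Convex ℝ (⋃ x : E c, Φ {x})) (h4 : PreservesHullBounds Φ) (hC : IsBody C) :
    Φ C = (⋃ x ∈ C, Φ {x}) ∪ Φ ∅ := by
  refine Subset.antisymm (fun y hy => ?_) <|
    union_subset (iUnion₂_subset (h1 C hC)) (image_empty_subset h1 h2 hC)
  obtain ⟨x, hyx⟩ := mem_iUnion.mp (image_subset_iUnion_image_singleton h3 h4 hC hy)
  by_cases hxC : x ∈ C
  · exact Or.inl (mem_biUnion hxC hyx)
  · exact Or.inr (h2 C hC x hxC ▸ ⟨hyx, hy⟩)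

theorem image_eq_biUnion (h1 : PreservesMem Φ) (h2 : PreservesNotMem Φ)
    (h3 : Convex ℝ (⋃ x : E c, Φ {x})) (h4 : PreservesHullBounds Φ) (hC : IsBody C)
    (hne : C.Nonempty) : Φ C = ⋃ x ∈ C, Φ {x} := by
  obtain ⟨x, hx⟩ := hne
  rw [image_eq_biUnion_union_empty h1 h2 h3 h4 hC, union_eq_left]
  exact (h2.image_empty_subset_singleton x).trans (subset_biUnion_of_mem (u := fun x => Φ {x}) hx)

theorem image_mono (h1 : PreservesMem Φ) (h2 : PreservesNotMem Φ)
    (h3 : Convex ℝ (⋃ x : E c, Φ {x})) (h4 : PreservesHullBounds Φ) (hC : IsBody C)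
    (hD : IsBody D) (hCD : C ⊆ D) : Φ C ⊆ Φ D := by
  rw [image_eq_biUnion_union_empty h1 h2 h3 h4 hC]
  exact union_subset (iUnion₂_subset fun x hx => h1 D hD x (hCD hx)) (image_empty_subset h1 h2 hD)

theorem image_inter (h1 : PreservesMem Φ) (h2 : PreservesNotMem Φ)
    (h3 : Convex ℝ (⋃ x : E c, Φ {x})) (h4 : PreservesHullBounds Φ) (hC : IsBody C)
    (hD : IsBody D) : Φ (C ∩ D) = Φ C ∩ Φ D := by
  have hCD := hC.inter hD
  refine Subset.antisymm (subset_inter (image_mono h1 h2 h3 h4 hCD hC inter_subset_left)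
    (image_mono h1 h2 h3 h4 hCD hD inter_subset_right)) ?_
  rintro y ⟨hyC, hyD⟩
  rw [image_eq_biUnion_union_empty h1 h2 h3 h4 hC] at hyC
  obtain hy | hy := hyC
  · obtain ⟨x, hxC, hyx⟩ := mem_iUnion₂.mp hy
    by_cases hxD : x ∈ D
    · exact h1 _ hCD x ⟨hxC, hxD⟩ hyx
    · exact image_empty_subset h1 h2 hCD (h2 D hD x hxD ▸ ⟨hyx, hyD⟩)
  · exact image_empty_subset h1 h2 hCD hy

theorem image_singleton_subset_convexHull_biUnion (h4 : PreservesHullBounds Φ) {s : Set (E c)}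
    {x : E c} (hx : x ∈ convexHull ℝ s) : Φ {x} ⊆ convexHull ℝ (⋃ y ∈ s, Φ {y}) := by
  obtain ⟨n, f, hfs, hxf⟩ := exists_fin_range_subset_of_mem_convexHull hx
  refine (h4 {x} (isBody_singleton x) n f (singleton_subset_iff.mpr hxf)).trans ?_
  exact convexHull_mono <| iUnion_subset fun i =>
    subset_biUnion_of_mem (u := fun y => Φ {y}) (hfs (mem_range_self i))

theorem image_convexHull_union (hmap : ∀ C, IsBody C → IsBody (Φ C)) (h1 : PreservesMem Φ)
    (h2 : PreservesNotMem Φ) (h3 : Convex ℝ (⋃ x : E c, Φ {x})) (h4 : PreservesHullBounds Φ)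
    (hC : IsBody C) (hD : IsBody D) :
    Φ (convexHull ℝ (C ∪ D)) = convexHull ℝ (Φ C ∪ Φ D) := by
  have hK := hC.convexHull_union hD
  refine Subset.antisymm ?_ <| convexHull_min (union_subset
    (image_mono h1 h2 h3 h4 hC hK (subset_union_left.trans (subset_convexHull ℝ _)))
    (image_mono h1 h2 h3 h4 hD hK (subset_union_right.trans (subset_convexHull ℝ _))))
    (hmap _ hK).1
  have hpoints : (⋃ y ∈ C ∪ D, Φ {y}) ⊆ Φ C ∪ Φ D := iUnion₂_subset fun y hy =>
    hy.elim (fun hyC => (h1 C hC y hyC).trans subset_union_left)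
      (fun hyD => (h1 D hD y hyD).trans subset_union_right)
  rw [image_eq_biUnion_union_empty h1 h2 h3 h4 hK]
  refine union_subset (iUnion₂_subset fun x hx => ?_) ?_
  · exact (image_singleton_subset_convexHull_biUnion h4 hx).trans (convexHull_mono hpoints)
  · exact (image_empty_subset h1 h2 hC).trans (subset_union_left.trans (subset_convexHull ℝ _))

end PointConditions

theorem stmt_2 (c d : ℕ) (Φ : Set (E c) → Set (E d))
    (hmap : ∀ C, IsBody C → IsBody (Φ C))
    (h1 : ∀ C : Set (E c), IsBody C → ∀ x : E c, x ∈ C → Φ {x} ⊆ Φ C)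
    (h2 : ∀ C : Set (E c), IsBody C → ∀ x : E c, x ∉ C → Φ {x} ∩ Φ C = Φ (∅ : Set (E c)))
    (h3 : Convex ℝ (⋃ x : E c, Φ {x}))
    (h4 : ∀ C : Set (E c), IsBody C → ∀ (n : ℕ) (x : Fin n → E c),
      C ⊆ convexHull ℝ (Set.range x) → Φ C ⊆ convexHull ℝ (⋃ i, Φ {x i})) :
    (∀ C : Set (E c), IsBody C → Φ C = (⋃ x ∈ C, Φ {x}) ∪ Φ (∅ : Set (E c))) ∧
    (∀ C : Set (E c), IsBody C → C.Nonempty → Φ C = ⋃ x ∈ C, Φ {x}) ∧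
    IsLatHom Φ :=
  ⟨fun _ hC => image_eq_biUnion_union_empty h1 h2 h3 h4 hC,
    fun _ hC hne => image_eq_biUnion h1 h2 h3 h4 hC hne,
    hmap, fun _ _ hC hD => ⟨image_inter h1 h2 h3 h4 hC hD,
      image_convexHull_union hmap h1 h2 h3 h4 hC hD⟩⟩
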